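/- Let X and Y be complex vector spaces and let D : X → Y be an additive map (D(x + y) = D(x) + D(y) for all x, y) such that D(μ x) = μ D(x) for every complex number μ of modulus 1 and every x ∈ X. Then D is ℂ-linear: D(λ x) = λ D(x) for all λ ∈ ℂ and x ∈ X. -/

import Mathlib

/-!
Every complex number of modulus at most `2` is a sum of two complex numbers of modulus one
(write `c = ‖c‖ e^{iθ}` and `‖c‖ = 2 cos φ`, then `c = e^{i(θ+φ)} + e^{i(θ-φ)}`), so by scaling
every complex number is a finite sum of points of the unit circle. An additive map commutes with
every sum of scalars it commutes with, hence with all of `ℂ`.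
-/

open Complex

theorem AddMonoidHom.map_smul_of_mem_closure {R X Y : Type*} [Semiring R]
    [AddCommMonoid X] [Module R X] [AddCommMonoid Y] [Module R Y]
    (f : X →+ Y) {s : Set R} (hs : ∀ r ∈ s, ∀ x, f (r • x) = r • f x)
    {r : R} (hr : r ∈ AddSubmonoid.closure s) (x : X) : f (r • x) = r • f x := by
  induction hr using AddSubmonoid.closure_induction with
  | mem r hr => exact hs r hr x
  | zero => simp
  | add r r' _ _ ih ih' => rw [add_smul, map_add, ih, ih', add_smul]

theorem Complex.exists_norm_eq_one_add_eq_of_norm_le_two {c : ℂ} (hc : ‖c‖ ≤ 2) :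
    ∃ μ ν : ℂ, ‖μ‖ = 1 ∧ ‖ν‖ = 1 ∧ μ + ν = c := by
  set φ := Real.arccos (‖c‖ / 2)
  have hcos : 2 * Real.cos φ = ‖c‖ := by
    rw [Real.cos_arccos (by linarith [norm_nonneg c]) (by linarith)]
    ring
  refine ⟨exp ((c.arg + φ : ℝ) * I), exp ((c.arg - φ : ℝ) * I),
    norm_exp_ofReal_mul_I _, norm_exp_ofReal_mul_I _, ?_⟩
  calc exp ((c.arg + φ : ℝ) * I) + exp ((c.arg - φ : ℝ) * I)
      = (2 * cos φ) * exp (c.arg * I) := by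
        rw [two_cos, add_mul, ← exp_add, ← exp_add]
        push_cast
        ring_nf
    _ = c := by
        rw [← ofReal_cos, ← ofReal_ofNat, ← ofReal_mul, hcos, norm_mul_exp_arg_mul_I]

theorem Complex.addSubmonoid_closure_sphere_eq_top :
    AddSubmonoid.closure (Metric.sphere (0 : ℂ) 1) = ⊤ := by
  refine (AddSubmonoid.eq_top_iff' _).2 fun c => ?_
  set n : ℕ := ⌈‖c‖⌉₊ + 1
  have hn : (0 : ℝ) < n := by positivity
  have hsmall : ‖c / n‖ ≤ 2 := by
    rw [norm_div, norm_natCast, div_le_iff₀ hn]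
    have : ‖c‖ ≤ n := (Nat.le_ceil _).trans (by norm_cast; omega)
    linarith
  obtain ⟨μ, ν, hμ, hν, hsum⟩ := exists_norm_eq_one_add_eq_of_norm_le_two hsmall
  have hmem : c / n ∈ AddSubmonoid.closure (Metric.sphere (0 : ℂ) 1) :=
    hsum ▸ add_mem (AddSubmonoid.subset_closure (by simpa using hμ))
      (AddSubmonoid.subset_closure (by simpa using hν))
  convert AddSubmonoid.nsmul_mem _ hmem n using 1
  rw [nsmul_eq_mul, mul_div_cancel₀ _ (by exact_mod_cast hn.ne')]

theorem additive_circle_homogeneous_is_linear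
    {X Y : Type*} [AddCommGroup X] [Module ℂ X] [AddCommGroup Y] [Module ℂ Y]
    (D : X → Y)
    (hadd : ∀ x y : X, D (x + y) = D x + D y)
    (hT : ∀ μ : ℂ, ‖μ‖ = 1 → ∀ x : X, D (μ • x) = μ • D x) :
    ∀ (c : ℂ) (x : X), D (c • x) = c • D x := fun c =>
  (AddMonoidHom.mk' D hadd).map_smul_of_mem_closure
    (fun μ hμ => hT μ (mem_sphere_zero_iff_norm.1 hμ))
    (addSubmonoid_closure_sphere_eq_top ▸ AddSubmonoid.mem_top c)
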